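/- arXiv:1512.05215 — 2 statements merged into one kernel-verified Lean document; each statement's English description precedes it below -/
import Mathlib

section
/- Let (Y, C, τ) be a general infinitesimal symmetry of the SDE (μ, σ), i.e. Y(μ) − L(Y) + τμ = 0 and [Y, σ] + (1/2)τσ + σ·C = 0 where C is antisymmetric-matrix-valued. Then for every smooth function f : M → ℝ, Y(L(f)) − L(Y(f)) = −τ L(f), where L = A^{ij}∂_i∂_j + μ^i∂_i with A = (1/2)σσᵀ. -/
open Matrix

/-- Partial derivative ∂ₖ f(x). -/
noncomputable def pd {n : ℕ} (f : (Fin n → ℝ) → ℝ) (k : Fin n) (x : Fin n → ℝ) : ℝ :=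
  fderiv ℝ f x (Pi.single k 1)

/-- The generator L = A^{ij}∂ᵢ∂ⱼ + b^i ∂ᵢ of the SDE (b, σ), A = (1/2)σσᵀ. -/
noncomputable def generator {n m : ℕ} (b : (Fin n → ℝ) → Fin n → ℝ)
    (σ : (Fin n → ℝ) → Matrix (Fin n) (Fin m) ℝ)
    (f : (Fin n → ℝ) → ℝ) (x : Fin n → ℝ) : ℝ :=
  (∑ i, ∑ j, ((1:ℝ)/2 * ∑ α, σ x i α * σ x j α) * pd (fun y => pd f j y) i x)
  + ∑ i, b x i * pd f i x

/-- The bracket [Y, σ]^i_j = Y^k ∂ₖ(σ^i_j) − σ^k_j ∂ₖ(Y^i). -/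
noncomputable def mbracket {n m : ℕ} (Y : (Fin n → ℝ) → Fin n → ℝ)
    (σ : (Fin n → ℝ) → Matrix (Fin n) (Fin m) ℝ) :
    (Fin n → ℝ) → Matrix (Fin n) (Fin m) ℝ :=
  fun x i j => (∑ k, Y x k * pd (fun y => σ y i j) k x)
    - ∑ k, σ x k j * pd (fun y => Y y i) k x

/-- The Lie bracket of vector fields. -/
noncomputable def vbracket {n : ℕ} (Y₁ Y₂ : (Fin n → ℝ) → Fin n → ℝ) :
    (Fin n → ℝ) → Fin n → ℝ :=
  fun x i => (∑ k, Y₁ x k * pd (fun y => Y₂ y i) k x)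
    - ∑ k, Y₂ x k * pd (fun y => Y₁ y i) k x

/-- The componentwise directional derivative Y(D). -/
noncomputable def dirDeriv {n p q : ℕ} (Y : (Fin n → ℝ) → Fin n → ℝ)
    (D : (Fin n → ℝ) → Matrix (Fin p) (Fin q) ℝ) :
    (Fin n → ℝ) → Matrix (Fin p) (Fin q) ℝ :=
  fun x i j => ∑ k, Y x k * pd (fun y => D y i j) k x

/-- (Y, C, τ) satisfies the determining equations of the SDE (b, σ) on M:
Y(μ) − L(Y) + τμ = 0 and [Y, σ] + (1/2)τσ + σ·C = 0. -/
def IsInfinitesimalSymmetry {n m : ℕ} (M : Set (Fin n → ℝ))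
    (b : (Fin n → ℝ) → Fin n → ℝ) (σ : (Fin n → ℝ) → Matrix (Fin n) (Fin m) ℝ)
    (Y : (Fin n → ℝ) → Fin n → ℝ) (C : (Fin n → ℝ) → Matrix (Fin m) (Fin m) ℝ)
    (τ : (Fin n → ℝ) → ℝ) : Prop :=
  (∀ x ∈ M, ∀ i, (∑ k, Y x k * pd (fun y => b y i) k x)
      - generator b σ (fun y => Y y i) x + τ x * b x i = 0) ∧
  (∀ x ∈ M, mbracket Y σ x + (τ x / 2) • σ x + σ x * C x = 0)

section helpers
variable {n : ℕ} {x : Fin n → ℝ} {M : Set (Fin n → ℝ)}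

lemma pd_congr_nhds {f g : (Fin n → ℝ) → ℝ} (h : f =ᶠ[nhds x] g) (k : Fin n) :
    pd f k x = pd g k x := by unfold pd; rw [h.fderiv_eq]

lemma pd_congr_open (hM : IsOpen M) (hx : x ∈ M)
    {f g : (Fin n → ℝ) → ℝ} (h : ∀ y ∈ M, f y = g y) (k : Fin n) :
    pd f k x = pd g k x :=
  pd_congr_nhds (Filter.eventuallyEq_of_mem (hM.mem_nhds hx) h) k

lemma pd_add {f g : (Fin n → ℝ) → ℝ} (hf : DifferentiableAt ℝ f x)
    (hg : DifferentiableAt ℝ g x) (k : Fin n) :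
    pd (fun y => f y + g y) k x = pd f k x + pd g k x := by
  unfold pd; rw [fderiv_fun_add hf hg]; simp

lemma pd_mul {f g : (Fin n → ℝ) → ℝ} (hf : DifferentiableAt ℝ f x)
    (hg : DifferentiableAt ℝ g x) (k : Fin n) :
    pd (fun y => f y * g y) k x = pd f k x * g x + f x * pd g k x := by
  unfold pd; rw [fderiv_fun_mul hf hg]; simp; ring

lemma pd_const_mul (c : ℝ) {f : (Fin n → ℝ) → ℝ} (hf : DifferentiableAt ℝ f x) (k : Fin n) :
    pd (fun y => c * f y) k x = c * pd f k x := by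
  unfold pd; rw [fderiv_const_mul hf]; simp

lemma pd_sum {ι : Type*} (s : Finset ι) (F : ι → (Fin n → ℝ) → ℝ)
    (h : ∀ i ∈ s, DifferentiableAt ℝ (F i) x) (k : Fin n) :
    pd (fun y => ∑ i ∈ s, F i y) k x = ∑ i ∈ s, pd (F i) k x := by
  unfold pd; rw [fderiv_fun_sum h]; simp

lemma diffAt_of_smooth {F : Type*} [NormedAddCommGroup F] [NormedSpace ℝ F]
    (hM : IsOpen M) (hx : x ∈ M) {f : (Fin n → ℝ) → F}
    (hf : ContDiffOn ℝ ((⊤:ℕ∞):WithTop ℕ∞) f M) : DifferentiableAt ℝ f x :=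
  (hf.contDiffAt (hM.mem_nhds hx)).differentiableAt (by simp)

lemma contDiffOn_pd (hM : IsOpen M) {f : (Fin n → ℝ) → ℝ}
    (hf : ContDiffOn ℝ ((⊤:ℕ∞):WithTop ℕ∞) f M) (k : Fin n) :
    ContDiffOn ℝ ((⊤:ℕ∞):WithTop ℕ∞) (fun y => pd f k y) M := by
  have h1 : ContDiffOn ℝ ((⊤:ℕ∞):WithTop ℕ∞) (fderiv ℝ f) M :=
    ((contDiffOn_infty_iff_fderiv_of_isOpen hM).1 hf).2
  exact (ContinuousLinearMap.apply ℝ ℝ (Pi.single k 1)).contDiff.comp_contDiffOn h1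

lemma pd_comm (hM : IsOpen M) (hx : x ∈ M) {f : (Fin n → ℝ) → ℝ}
    (hf : ContDiffOn ℝ ((⊤:ℕ∞):WithTop ℕ∞) f M) (i j : Fin n) :
    pd (fun y => pd f j y) i x = pd (fun y => pd f i y) j x := by
  have hd : DifferentiableAt ℝ (fderiv ℝ f) x :=
    diffAt_of_smooth hM hx ((contDiffOn_infty_iff_fderiv_of_isOpen hM).1 hf).2
  have hsym : IsSymmSndFDerivAt ℝ f x :=
    (hf.contDiffAt (hM.mem_nhds hx)).isSymmSndFDerivAt (by rw [minSmoothness_of_isRCLikeNormedField]; exact WithTop.coe_le_coe.2 (le_top : (2:ℕ∞) ≤ ⊤))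
  have e : ∀ (a c : Fin n), pd (fun y => pd f c y) a x
      = fderiv ℝ (fderiv ℝ f) x (Pi.single a 1) (Pi.single c 1) := by
    intro a c
    show fderiv ℝ (fun y => fderiv ℝ f y (Pi.single c 1)) x (Pi.single a 1) = _
    rw [fderiv_clm_apply hd (differentiableAt_const _)]
    simp
  rw [e, e, hsym]
end helpers

section expand
variable {n m : ℕ} {x : Fin n → ℝ} {M : Set (Fin n → ℝ)}
variable {b : (Fin n → ℝ) → Fin n → ℝ} {σ : (Fin n → ℝ) → Matrix (Fin n) (Fin m) ℝ}
variable {f : (Fin n → ℝ) → ℝ}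

/-- pd of the generator, expanded. -/
lemma pd_generator (hM : IsOpen M) (hx : x ∈ M)
    (hb : ∀ i, ContDiffOn ℝ ((⊤:ℕ∞):WithTop ℕ∞) (fun y => b y i) M)
    (hσ : ∀ i α, ContDiffOn ℝ ((⊤:ℕ∞):WithTop ℕ∞) (fun y => σ y i α) M)
    (hf : ContDiffOn ℝ ((⊤:ℕ∞):WithTop ℕ∞) f M) (k : Fin n) :
    pd (fun y => generator b σ f y) k x =
      (∑ i, ∑ j,
        (((1:ℝ)/2 * ∑ α, (pd (fun y => σ y i α) k x * σ x j α
              + σ x i α * pd (fun y => σ y j α) k x)) * pd (fun y => pd f j y) i x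
        + ((1:ℝ)/2 * ∑ α, σ x i α * σ x j α)
            * pd (fun y => pd (fun z => pd f j z) i y) k x))
      + ∑ i, (pd (fun y => b y i) k x * pd f i x
          + b x i * pd (fun y => pd f i y) k x) := by
  have dσ : ∀ i α, DifferentiableAt ℝ (fun y => σ y i α) x :=
    fun i α => diffAt_of_smooth hM hx (hσ i α)
  have db : ∀ i, DifferentiableAt ℝ (fun y => b y i) x :=
    fun i => diffAt_of_smooth hM hx (hb i)
  have sF1 : ∀ i, ContDiffOn ℝ ((⊤:ℕ∞):WithTop ℕ∞) (fun y => pd f i y) M :=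
    fun i => contDiffOn_pd hM hf i
  have dF1 : ∀ i, DifferentiableAt ℝ (fun y => pd f i y) x :=
    fun i => diffAt_of_smooth hM hx (sF1 i)
  have dF2 : ∀ i j, DifferentiableAt ℝ (fun y => pd (fun z => pd f j z) i y) x :=
    fun i j => diffAt_of_smooth hM hx (contDiffOn_pd hM (sF1 j) i)
  have dsσ : ∀ i j, DifferentiableAt ℝ (fun y => ∑ α, σ y i α * σ y j α) x :=
    fun i j => DifferentiableAt.fun_sum (fun α _ => (dσ i α).mul (dσ j α))
  have dA : ∀ i j, DifferentiableAt ℝ (fun y => (1:ℝ)/2 * ∑ α, σ y i α * σ y j α) x :=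
    fun i j => ((DifferentiableAt.fun_sum (fun α _ => (dσ i α).mul (dσ j α)))).const_mul _
  have dterm : ∀ i j, DifferentiableAt ℝ
      (fun y => ((1:ℝ)/2 * ∑ α, σ y i α * σ y j α) * pd (fun z => pd f j z) i y) x :=
    fun i j => (dA i j).mul (dF2 i j)
  have dsum2 : ∀ i, DifferentiableAt ℝ
      (fun y => ∑ j, ((1:ℝ)/2 * ∑ α, σ y i α * σ y j α) * pd (fun z => pd f j z) i y) x :=
    fun i => DifferentiableAt.fun_sum (fun j _ => dterm i j)
  have d1 : DifferentiableAt ℝ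
      (fun y => ∑ i, ∑ j, ((1:ℝ)/2 * ∑ α, σ y i α * σ y j α) * pd (fun z => pd f j z) i y) x :=
    DifferentiableAt.fun_sum (fun i _ => dsum2 i)
  have d2 : DifferentiableAt ℝ (fun y => ∑ i, b y i * pd f i y) x :=
    DifferentiableAt.fun_sum (fun i _ => (db i).mul (dF1 i))
  calc pd (fun y => generator b σ f y) k x
      = pd (fun y => (∑ i, ∑ j, ((1:ℝ)/2 * ∑ α, σ y i α * σ y j α)
              * pd (fun z => pd f j z) i y) + ∑ i, b y i * pd f i y) k x := rfl
    _ = pd (fun y => ∑ i, ∑ j, ((1:ℝ)/2 * ∑ α, σ y i α * σ y j α)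
              * pd (fun z => pd f j z) i y) k x
        + pd (fun y => ∑ i, b y i * pd f i y) k x := pd_add d1 d2 k
    _ = (∑ i, pd (fun y => ∑ j, ((1:ℝ)/2 * ∑ α, σ y i α * σ y j α)
              * pd (fun z => pd f j z) i y) k x)
        + ∑ i, pd (fun y => b y i * pd f i y) k x := by
          rw [pd_sum Finset.univ (fun i y => ∑ j, ((1:ℝ)/2 * ∑ α, σ y i α * σ y j α)
                * pd (fun z => pd f j z) i y) (fun i _ => dsum2 i) k,
              pd_sum Finset.univ (fun i y => b y i * pd f i y)
                (fun i _ => (db i).mul (dF1 i)) k]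
    _ = _ := by
      congr 1
      · refine Finset.sum_congr rfl fun i _ => ?_
        rw [pd_sum Finset.univ (fun j y => ((1:ℝ)/2 * ∑ α, σ y i α * σ y j α)
              * pd (fun z => pd f j z) i y) (fun j _ => dterm i j) k]
        refine Finset.sum_congr rfl fun j _ => ?_
        rw [pd_mul (dA i j) (dF2 i j) k, pd_const_mul ((1:ℝ)/2) (dsσ i j) k,
          pd_sum Finset.univ (fun α y => σ y i α * σ y j α)
            (fun α _ => (dσ i α).mul (dσ j α)) k]
        rw [Finset.sum_congr rfl (fun α _ => pd_mul (dσ i α) (dσ j α) k)]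
      · refine Finset.sum_congr rfl fun i _ => ?_
        rw [pd_mul (db i) (dF1 i) k]
end expand

section expand2
variable {n m : ℕ} {x : Fin n → ℝ} {M : Set (Fin n → ℝ)}
variable {b : (Fin n → ℝ) → Fin n → ℝ} {σ : (Fin n → ℝ) → Matrix (Fin n) (Fin m) ℝ}
variable {Y : (Fin n → ℝ) → Fin n → ℝ} {f : (Fin n → ℝ) → ℝ}

lemma generator_Yf (hM : IsOpen M) (hx : x ∈ M)
    (hY : ∀ k, ContDiffOn ℝ ((⊤:ℕ∞):WithTop ℕ∞) (fun y => Y y k) M)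
    (hf : ContDiffOn ℝ ((⊤:ℕ∞):WithTop ℕ∞) f M) :
    generator b σ (fun y => ∑ k, Y y k * pd f k y) x
    = (∑ i, ∑ j, ((1:ℝ)/2 * ∑ α, σ x i α * σ x j α) *
        (∑ k, (pd (fun y => pd (fun z => Y z k) j y) i x * pd f k x
             + pd (fun y => Y y k) j x * pd (fun z => pd f k z) i x
             + pd (fun y => Y y k) i x * pd (fun z => pd f k z) j x
             + Y x k * pd (fun y => pd (fun z => pd f k z) j y) i x)))
    + ∑ i, b x i * (∑ k, (pd (fun y => Y y k) i x * pd f k x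
        + Y x k * pd (fun z => pd f k z) i x)) := by
  have sF1 : ∀ p, ContDiffOn ℝ ((⊤:ℕ∞):WithTop ℕ∞) (fun y => pd f p y) M :=
    fun p => contDiffOn_pd hM hf p
  -- first derivative of g on M
  have hpdg : ∀ (j : Fin n) (y : Fin n → ℝ), y ∈ M →
      pd (fun z => ∑ p, Y z p * pd f p z) j y
      = ∑ p, (pd (fun z => Y z p) j y * pd f p y
            + Y y p * pd (fun z => pd f p z) j y) := by
    intro j y hy
    rw [pd_sum Finset.univ (fun p z => Y z p * pd f p z)
      (fun p _ => (diffAt_of_smooth hM hy (hY p)).mul (diffAt_of_smooth hM hy (sF1 p))) j]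
    exact Finset.sum_congr rfl fun p _ =>
      pd_mul (diffAt_of_smooth hM hy (hY p)) (diffAt_of_smooth hM hy (sF1 p)) j
  -- second derivative of g at x
  have hpd2 : ∀ (i j : Fin n),
      pd (fun y => pd (fun z => ∑ p, Y z p * pd f p z) j y) i x
      = ∑ p, (pd (fun y => pd (fun z => Y z p) j y) i x * pd f p x
            + pd (fun y => Y y p) j x * pd (fun z => pd f p z) i x
            + pd (fun y => Y y p) i x * pd (fun z => pd f p z) j x
            + Y x p * pd (fun y => pd (fun z => pd f p z) j y) i x) := by
    intro i j
    rw [pd_congr_open hM hx (hpdg j) i]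
    have dt1 : ∀ p, DifferentiableAt ℝ (fun y => pd (fun z => Y z p) j y * pd f p y) x :=
      fun p => (diffAt_of_smooth hM hx (contDiffOn_pd hM (hY p) j)).mul
        (diffAt_of_smooth hM hx (sF1 p))
    have dt2 : ∀ p, DifferentiableAt ℝ (fun y => Y y p * pd (fun z => pd f p z) j y) x :=
      fun p => (diffAt_of_smooth hM hx (hY p)).mul
        (diffAt_of_smooth hM hx (contDiffOn_pd hM (sF1 p) j))
    rw [pd_sum Finset.univ (fun p y => pd (fun z => Y z p) j y * pd f p y
          + Y y p * pd (fun z => pd f p z) j y)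
        (fun p _ => (dt1 p).add (dt2 p)) i]
    refine Finset.sum_congr rfl fun p _ => ?_
    rw [pd_add (dt1 p) (dt2 p) i,
        pd_mul (diffAt_of_smooth hM hx (contDiffOn_pd hM (hY p) j))
          (diffAt_of_smooth hM hx (sF1 p)) i,
        pd_mul (diffAt_of_smooth hM hx (hY p))
          (diffAt_of_smooth hM hx (contDiffOn_pd hM (sF1 p) j)) i]
    ring
  show (∑ i, ∑ j, ((1:ℝ)/2 * ∑ α, σ x i α * σ x j α)
        * pd (fun y => pd (fun z => ∑ p, Y z p * pd f p z) j y) i x)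
      + ∑ i, b x i * pd (fun z => ∑ p, Y z p * pd f p z) i x = _
  congr 1
  · exact Finset.sum_congr rfl fun i _ => Finset.sum_congr rfl fun j _ => by rw [hpd2 i j]
  · exact Finset.sum_congr rfl fun i _ => by rw [hpdg i x hx]
end expand2

lemma key_algebra {n m : ℕ}
    (A : Fin n → Fin n → ℝ) (S : Fin n → Fin m → ℝ)
    (Dσ : Fin n → Fin n → Fin m → ℝ) (Db : Fin n → Fin n → ℝ)
    (DY : Fin n → Fin n → ℝ) (DDY : Fin n → Fin n → Fin n → ℝ)
    (F1 : Fin n → ℝ) (F2 : Fin n → Fin n → ℝ) (F3 : Fin n → Fin n → Fin n → ℝ)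
    (Yv Bv : Fin n → ℝ) (Cm : Fin m → Fin m → ℝ) (T : ℝ)
    (hA : ∀ i j, A i j = (1:ℝ)/2 * ∑ α, S i α * S j α)
    (hE1 : ∀ i, ∑ k, Yv k * Db k i
      = ((∑ p, ∑ q, A p q * DDY p q i) + ∑ k, Bv k * DY k i) - T * Bv i)
    (hE2 : ∀ i α, ∑ k, Yv k * Dσ k i α
      = (∑ p, S p α * DY p i) - T/2 * S i α - ∑ β, S i β * Cm β α)
    (hF2 : ∀ i j, F2 i j = F2 j i)
    (hF3 : ∀ k i j, F3 k i j = F3 i j k)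
    (hC : ∀ α β, Cm α β = - Cm β α) :
    (∑ k, Yv k * ((∑ i, ∑ j, (((1:ℝ)/2 * ∑ α, (Dσ k i α * S j α + S i α * Dσ k j α)) * F2 i j
          + A i j * F3 k i j)) + ∑ i, (Db k i * F1 i + Bv i * F2 k i)))
      - ((∑ i, ∑ j, A i j * (∑ p, (DDY i j p * F1 p + DY j p * F2 i p
            + DY i p * F2 j p + Yv p * F3 i j p)))
        + ∑ i, Bv i * (∑ p, (DY i p * F1 p + Yv p * F2 i p)))
      = -(T * ((∑ i, ∑ j, A i j * F2 i j) + ∑ i, Bv i * F1 i)) := by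
  have hAsym : ∀ i j, A i j = A j i := by
    intro i j; rw [hA, hA]
    exact congrArg _ (Finset.sum_congr rfl fun α _ => mul_comm _ _)
  -- the pointwise key identity coming from the second determining equation
  have claim : ∀ i j, ∑ k, Yv k * ((1:ℝ)/2 * ∑ α, (Dσ k i α * S j α + S i α * Dσ k j α))
      = (∑ p, A i p * DY p j) + (∑ p, A j p * DY p i) - T * A i j := by
    intro i j
    have c1 : ∑ k, Yv k * ((1:ℝ)/2 * ∑ α, (Dσ k i α * S j α + S i α * Dσ k j α))
        = ∑ α, (1:ℝ)/2 * ((∑ k, Yv k * Dσ k i α) * S j α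
            + S i α * (∑ k, Yv k * Dσ k j α)) := by
      calc ∑ k, Yv k * ((1:ℝ)/2 * ∑ α, (Dσ k i α * S j α + S i α * Dσ k j α))
          = ∑ k, ∑ α, Yv k * ((1:ℝ)/2 * (Dσ k i α * S j α + S i α * Dσ k j α)) := by
            simp only [Finset.mul_sum]
        _ = ∑ α, ∑ k, Yv k * ((1:ℝ)/2 * (Dσ k i α * S j α + S i α * Dσ k j α)) :=
            Finset.sum_comm
        _ = _ := by
            refine Finset.sum_congr rfl fun α _ => ?_
            simp only [Finset.sum_mul, Finset.mul_sum, mul_add, Finset.sum_add_distrib]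
            congr 1 <;> exact Finset.sum_congr rfl fun k _ => by ring
    rw [c1]
    have c2 : ∀ α, (1:ℝ)/2 * ((∑ k, Yv k * Dσ k i α) * S j α
            + S i α * (∑ k, Yv k * Dσ k j α))
        = (1:ℝ)/2 * (((∑ p, S p α * DY p i) - T/2 * S i α - ∑ β, S i β * Cm β α) * S j α
            + S i α * ((∑ p, S p α * DY p j) - T/2 * S j α - ∑ β, S j β * Cm β α)) := by
      intro α; rw [hE2 i α, hE2 j α]
    rw [Finset.sum_congr rfl fun α _ => c2 α]
    have split : ∀ α, (1:ℝ)/2 * (((∑ p, S p α * DY p i) - T/2 * S i α - ∑ β, S i β * Cm β α) * S j α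
            + S i α * ((∑ p, S p α * DY p j) - T/2 * S j α - ∑ β, S j β * Cm β α))
        = ((1:ℝ)/2 * (S j α * ∑ p, S p α * DY p i)
          + (1:ℝ)/2 * (S i α * ∑ p, S p α * DY p j))
          - T/2 * (S i α * S j α)
          - (1:ℝ)/2 * ((∑ β, S i β * Cm β α) * S j α + S i α * (∑ β, S j β * Cm β α)) := by
      intro α; ring
    rw [Finset.sum_congr rfl fun α _ => split α, Finset.sum_sub_distrib,
      Finset.sum_sub_distrib, Finset.sum_add_distrib]
    have hcancel : ∑ α, ((∑ β, S i β * Cm β α) * S j α + S i α * (∑ β, S j β * Cm β α)) = 0 := by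
      rw [Finset.sum_add_distrib]
      have e2 : ∑ α, S i α * (∑ β, S j β * Cm β α)
          = - ∑ α, (∑ β, S i β * Cm β α) * S j α := by
        calc ∑ α, S i α * (∑ β, S j β * Cm β α)
            = ∑ α, ∑ β, S i α * (S j β * Cm β α) := by simp only [Finset.mul_sum]
          _ = ∑ α, ∑ β, S i β * (S j α * Cm α β) := Finset.sum_comm
          _ = ∑ α, ∑ β, -((S i β * Cm β α) * S j α) := by
              refine Finset.sum_congr rfl fun α _ => Finset.sum_congr rfl fun β _ => ?_
              rw [hC α β]; ring
          _ = - ∑ α, (∑ β, S i β * Cm β α) * S j α := by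
              simp only [Finset.sum_neg_distrib, Finset.sum_mul]
      rw [e2]; ring
    have t4 : ∑ α, (1:ℝ)/2 * ((∑ β, S i β * Cm β α) * S j α + S i α * (∑ β, S j β * Cm β α))
        = 0 := by
      rw [← Finset.mul_sum, hcancel, mul_zero]
    have t1 : ∑ α, (1:ℝ)/2 * (S j α * ∑ p, S p α * DY p i) = ∑ p, A j p * DY p i := by
      calc ∑ α, (1:ℝ)/2 * (S j α * ∑ p, S p α * DY p i)
          = ∑ α, ∑ p, (1:ℝ)/2 * (S j α * (S p α * DY p i)) := by
            simp only [Finset.mul_sum]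
        _ = ∑ p, ∑ α, (1:ℝ)/2 * (S j α * (S p α * DY p i)) := Finset.sum_comm
        _ = ∑ p, A j p * DY p i := by
            refine Finset.sum_congr rfl fun p _ => ?_
            rw [hA j p]
            simp only [Finset.mul_sum, Finset.sum_mul]
            exact Finset.sum_congr rfl fun α _ => by ring
    have t2 : ∑ α, (1:ℝ)/2 * (S i α * ∑ p, S p α * DY p j) = ∑ p, A i p * DY p j := by
      calc ∑ α, (1:ℝ)/2 * (S i α * ∑ p, S p α * DY p j)
          = ∑ α, ∑ p, (1:ℝ)/2 * (S i α * (S p α * DY p j)) := by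
            simp only [Finset.mul_sum]
        _ = ∑ p, ∑ α, (1:ℝ)/2 * (S i α * (S p α * DY p j)) := Finset.sum_comm
        _ = ∑ p, A i p * DY p j := by
            refine Finset.sum_congr rfl fun p _ => ?_
            rw [hA i p]
            simp only [Finset.mul_sum, Finset.sum_mul]
            exact Finset.sum_congr rfl fun α _ => by ring
    have t3 : ∑ α, T/2 * (S i α * S j α) = T * A i j := by
      rw [hA i j]
      simp only [Finset.mul_sum]
      exact Finset.sum_congr rfl fun α _ => by ring
    rw [t1, t2, t3, t4]
    ring
  -- the four block identities
  have hX1 : ∑ k, Yv k * ∑ i, ∑ j, ((1:ℝ)/2 * ∑ α, (Dσ k i α * S j α + S i α * Dσ k j α)) * F2 i j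
      = (∑ i, ∑ j, A i j * ∑ p, DY j p * F2 i p) + (∑ i, ∑ j, A i j * ∑ p, DY i p * F2 j p)
        - T * ∑ i, ∑ j, A i j * F2 i j := by
    have z2eq : ∑ i, ∑ j, A i j * ∑ p, DY j p * F2 i p
        = ∑ i, ∑ j, (∑ p, A i p * DY p j) * F2 i j := by
      calc ∑ i, ∑ j, A i j * ∑ p, DY j p * F2 i p
          = ∑ i, ∑ j, ∑ p, A i j * (DY j p * F2 i p) := by simp only [Finset.mul_sum]
        _ = ∑ i, ∑ j, ∑ p, A i p * (DY p j * F2 i j) :=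
            Finset.sum_congr rfl fun i _ => Finset.sum_comm
        _ = ∑ i, ∑ j, (∑ p, A i p * DY p j) * F2 i j := by
            refine Finset.sum_congr rfl fun i _ => Finset.sum_congr rfl fun j _ => ?_
            rw [Finset.sum_mul]
            exact Finset.sum_congr rfl fun p _ => by ring
    have z3z2 : ∑ i, ∑ j, A i j * ∑ p, DY i p * F2 j p
        = ∑ i, ∑ j, A i j * ∑ p, DY j p * F2 i p := by
      calc ∑ i, ∑ j, A i j * ∑ p, DY i p * F2 j p
          = ∑ i, ∑ j, A j i * ∑ p, DY j p * F2 i p := Finset.sum_comm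
        _ = ∑ i, ∑ j, A i j * ∑ p, DY j p * F2 i p :=
            Finset.sum_congr rfl fun i _ => Finset.sum_congr rfl fun j _ => by rw [hAsym j i]
    have p2p1 : ∑ i, ∑ j, (∑ p, A j p * DY p i) * F2 i j
        = ∑ i, ∑ j, (∑ p, A i p * DY p j) * F2 i j := by
      calc ∑ i, ∑ j, (∑ p, A j p * DY p i) * F2 i j
          = ∑ i, ∑ j, (∑ p, A i p * DY p j) * F2 j i := Finset.sum_comm
        _ = ∑ i, ∑ j, (∑ p, A i p * DY p j) * F2 i j :=
            Finset.sum_congr rfl fun i _ => Finset.sum_congr rfl fun j _ => by rw [hF2 j i]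
    have tW1 : ∑ i, ∑ j, (T * A i j) * F2 i j = T * ∑ i, ∑ j, A i j * F2 i j := by
      simp only [Finset.mul_sum]
      exact Finset.sum_congr rfl fun i _ => Finset.sum_congr rfl fun j _ => by ring
    calc ∑ k, Yv k * ∑ i, ∑ j, ((1:ℝ)/2 * ∑ α, (Dσ k i α * S j α + S i α * Dσ k j α)) * F2 i j
        = ∑ k, ∑ i, ∑ j, Yv k * (((1:ℝ)/2 * ∑ α, (Dσ k i α * S j α + S i α * Dσ k j α)) * F2 i j) := by
          simp only [Finset.mul_sum]
      _ = ∑ i, ∑ k, ∑ j, Yv k * (((1:ℝ)/2 * ∑ α, (Dσ k i α * S j α + S i α * Dσ k j α)) * F2 i j) :=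
          Finset.sum_comm
      _ = ∑ i, ∑ j, ∑ k, Yv k * (((1:ℝ)/2 * ∑ α, (Dσ k i α * S j α + S i α * Dσ k j α)) * F2 i j) :=
          Finset.sum_congr rfl fun i _ => Finset.sum_comm
      _ = ∑ i, ∑ j, (∑ k, Yv k * ((1:ℝ)/2 * ∑ α, (Dσ k i α * S j α + S i α * Dσ k j α))) * F2 i j := by
          refine Finset.sum_congr rfl fun i _ => Finset.sum_congr rfl fun j _ => ?_
          rw [Finset.sum_mul]
          exact Finset.sum_congr rfl fun k _ => by ring
      _ = ∑ i, ∑ j, ((∑ p, A i p * DY p j) + (∑ p, A j p * DY p i) - T * A i j) * F2 i j := by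
          refine Finset.sum_congr rfl fun i _ => Finset.sum_congr rfl fun j _ => ?_
          rw [claim i j]
      _ = (∑ i, ∑ j, (∑ p, A i p * DY p j) * F2 i j) + (∑ i, ∑ j, (∑ p, A j p * DY p i) * F2 i j)
          - ∑ i, ∑ j, (T * A i j) * F2 i j := by
          simp only [add_mul, sub_mul, Finset.sum_add_distrib, Finset.sum_sub_distrib]
      _ = (∑ i, ∑ j, A i j * ∑ p, DY j p * F2 i p) + (∑ i, ∑ j, A i j * ∑ p, DY i p * F2 j p)
          - T * ∑ i, ∑ j, A i j * F2 i j := by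
          rw [z2eq, z3z2.trans (z2eq.trans p2p1.symm), tW1]
  have hX2 : ∑ k, Yv k * ∑ i, ∑ j, A i j * F3 k i j
      = ∑ i, ∑ j, A i j * ∑ p, Yv p * F3 i j p := by
    calc ∑ k, Yv k * ∑ i, ∑ j, A i j * F3 k i j
        = ∑ k, ∑ i, ∑ j, Yv k * (A i j * F3 k i j) := by simp only [Finset.mul_sum]
      _ = ∑ i, ∑ k, ∑ j, Yv k * (A i j * F3 k i j) := Finset.sum_comm
      _ = ∑ i, ∑ j, ∑ k, Yv k * (A i j * F3 k i j) :=
          Finset.sum_congr rfl fun i _ => Finset.sum_comm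
      _ = ∑ i, ∑ j, ∑ p, A i j * (Yv p * F3 i j p) := by
          refine Finset.sum_congr rfl fun i _ => Finset.sum_congr rfl fun j _ =>
            Finset.sum_congr rfl fun p _ => ?_
          rw [hF3 p i j]; ring
      _ = ∑ i, ∑ j, A i j * ∑ p, Yv p * F3 i j p := by simp only [Finset.mul_sum]
  have hX3 : ∑ k, Yv k * ∑ i, Db k i * F1 i
      = (∑ i, ∑ j, A i j * ∑ p, DDY i j p * F1 p) + (∑ i, Bv i * ∑ p, DY i p * F1 p)
        - T * ∑ i, Bv i * F1 i := by
    have q1 : ∑ i, ∑ j, A i j * ∑ p, DDY i j p * F1 p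
        = ∑ i, (∑ p, ∑ q, A p q * DDY p q i) * F1 i := by
      calc ∑ i, ∑ j, A i j * ∑ p, DDY i j p * F1 p
          = ∑ i, ∑ j, ∑ p, A i j * (DDY i j p * F1 p) := by simp only [Finset.mul_sum]
        _ = ∑ i, ∑ p, ∑ j, A i j * (DDY i j p * F1 p) :=
            Finset.sum_congr rfl fun i _ => Finset.sum_comm
        _ = ∑ p, ∑ i, ∑ j, A i j * (DDY i j p * F1 p) := Finset.sum_comm
        _ = ∑ i, (∑ p, ∑ q, A p q * DDY p q i) * F1 i := by
            refine Finset.sum_congr rfl fun i _ => ?_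
            rw [Finset.sum_mul]
            refine Finset.sum_congr rfl fun p _ => ?_
            rw [Finset.sum_mul]
            exact Finset.sum_congr rfl fun q _ => by ring
    have q2 : ∑ i, Bv i * ∑ p, DY i p * F1 p = ∑ i, (∑ k, Bv k * DY k i) * F1 i := by
      calc ∑ i, Bv i * ∑ p, DY i p * F1 p
          = ∑ i, ∑ p, Bv i * (DY i p * F1 p) := by simp only [Finset.mul_sum]
        _ = ∑ p, ∑ i, Bv i * (DY i p * F1 p) := Finset.sum_comm
        _ = ∑ i, (∑ k, Bv k * DY k i) * F1 i := by
            refine Finset.sum_congr rfl fun i _ => ?_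
            rw [Finset.sum_mul]
            exact Finset.sum_congr rfl fun k _ => by ring
    have q3 : T * ∑ i, Bv i * F1 i = ∑ i, (T * Bv i) * F1 i := by
      rw [Finset.mul_sum]
      exact Finset.sum_congr rfl fun i _ => by ring
    calc ∑ k, Yv k * ∑ i, Db k i * F1 i
        = ∑ k, ∑ i, Yv k * (Db k i * F1 i) := by simp only [Finset.mul_sum]
      _ = ∑ i, ∑ k, Yv k * (Db k i * F1 i) := Finset.sum_comm
      _ = ∑ i, (∑ k, Yv k * Db k i) * F1 i := by
          refine Finset.sum_congr rfl fun i _ => ?_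
          rw [Finset.sum_mul]
          exact Finset.sum_congr rfl fun k _ => by ring
      _ = ∑ i, (((∑ p, ∑ q, A p q * DDY p q i) + ∑ k, Bv k * DY k i) - T * Bv i) * F1 i := by
          refine Finset.sum_congr rfl fun i _ => ?_
          rw [hE1 i]
      _ = (∑ i, (∑ p, ∑ q, A p q * DDY p q i) * F1 i) + (∑ i, (∑ k, Bv k * DY k i) * F1 i)
          - ∑ i, (T * Bv i) * F1 i := by
          simp only [add_mul, sub_mul, Finset.sum_add_distrib, Finset.sum_sub_distrib]
      _ = (∑ i, ∑ j, A i j * ∑ p, DDY i j p * F1 p) + (∑ i, Bv i * ∑ p, DY i p * F1 p)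
          - T * ∑ i, Bv i * F1 i := by
          rw [q1, q2, q3]
  have hX4 : ∑ k, Yv k * ∑ i, Bv i * F2 k i = ∑ i, Bv i * ∑ p, Yv p * F2 i p := by
    calc ∑ k, Yv k * ∑ i, Bv i * F2 k i
        = ∑ k, ∑ i, Yv k * (Bv i * F2 k i) := by simp only [Finset.mul_sum]
      _ = ∑ i, ∑ k, Yv k * (Bv i * F2 k i) := Finset.sum_comm
      _ = ∑ i, ∑ p, Bv i * (Yv p * F2 i p) := by
          refine Finset.sum_congr rfl fun i _ => Finset.sum_congr rfl fun p _ => ?_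
          rw [hF2 p i]; ring
      _ = ∑ i, Bv i * ∑ p, Yv p * F2 i p := by simp only [Finset.mul_sum]
  -- assemble
  calc (∑ k, Yv k * ((∑ i, ∑ j, (((1:ℝ)/2 * ∑ α, (Dσ k i α * S j α + S i α * Dσ k j α)) * F2 i j
          + A i j * F3 k i j)) + ∑ i, (Db k i * F1 i + Bv i * F2 k i)))
      - ((∑ i, ∑ j, A i j * (∑ p, (DDY i j p * F1 p + DY j p * F2 i p
            + DY i p * F2 j p + Yv p * F3 i j p)))
        + ∑ i, Bv i * (∑ p, (DY i p * F1 p + Yv p * F2 i p)))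
      = ((∑ k, Yv k * ∑ i, ∑ j, ((1:ℝ)/2 * ∑ α, (Dσ k i α * S j α + S i α * Dσ k j α)) * F2 i j)
          + (∑ k, Yv k * ∑ i, ∑ j, A i j * F3 k i j)
          + ((∑ k, Yv k * ∑ i, Db k i * F1 i) + ∑ k, Yv k * ∑ i, Bv i * F2 k i))
        - ((∑ i, ∑ j, A i j * ∑ p, DDY i j p * F1 p)
          + (∑ i, ∑ j, A i j * ∑ p, DY j p * F2 i p)
          + (∑ i, ∑ j, A i j * ∑ p, DY i p * F2 j p)
          + (∑ i, ∑ j, A i j * ∑ p, Yv p * F3 i j p)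
          + ((∑ i, Bv i * ∑ p, DY i p * F1 p) + ∑ i, Bv i * ∑ p, Yv p * F2 i p)) := by
        simp only [Finset.sum_add_distrib, mul_add]
    _ = -(T * ((∑ i, ∑ j, A i j * F2 i j) + ∑ i, Bv i * F1 i)) := by
        rw [hX1, hX2, hX3, hX4]; ring


/-- Lemma 4.1: if (Y, C, τ) is a general infinitesimal symmetry
of the SDE (b, σ) with C antisymmetric, then for every smooth f,
Y(L(f)) − L(Y(f)) = −τ L(f). -/
theorem symmetry_commutation_with_generator {n m : ℕ}
    (M : Set (Fin n → ℝ)) (hM : IsOpen M)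
    (b : (Fin n → ℝ) → Fin n → ℝ) (σ : (Fin n → ℝ) → Matrix (Fin n) (Fin m) ℝ)
    (hb : ContDiffOn ℝ (⊤ : ℕ∞) b M)
    (hσ : ContDiffOn ℝ (⊤ : ℕ∞) (fun x i α => σ x i α : (Fin n → ℝ) → Fin n → Fin m → ℝ) M)
    (Y : (Fin n → ℝ) → Fin n → ℝ) (C : (Fin n → ℝ) → Matrix (Fin m) (Fin m) ℝ)
    (τ : (Fin n → ℝ) → ℝ)
    (hY : ContDiffOn ℝ (⊤ : ℕ∞) Y M)
    (hC : ContDiffOn ℝ (⊤ : ℕ∞) (fun x i j => C x i j : (Fin n → ℝ) → Fin m → Fin m → ℝ) M)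
    (hτ : ContDiffOn ℝ (⊤ : ℕ∞) τ M)
    (hCanti : ∀ x ∈ M, (C x)ᵀ = -C x)
    (hsym : IsInfinitesimalSymmetry M b σ Y C τ)
    (f : (Fin n → ℝ) → ℝ) (hf : ContDiffOn ℝ (⊤ : ℕ∞) f M) :
    ∀ x ∈ M,
      (∑ k, Y x k * pd (fun y => generator b σ f y) k x)
        - generator b σ (fun y => ∑ k, Y y k * pd f k y) x
      = -(τ x * generator b σ f x) := by
  obtain ⟨hsym1, hsym2⟩ := hsym
  intro x hx
  have hf' : ContDiffOn ℝ ((⊤:ℕ∞):WithTop ℕ∞) f M := hf.of_le (by simp)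
  have hb' : ∀ i, ContDiffOn ℝ ((⊤:ℕ∞):WithTop ℕ∞) (fun y => b y i) M :=
    fun i => (contDiffOn_pi.1 (hb.of_le (by simp))) i
  have hσ' : ∀ i α, ContDiffOn ℝ ((⊤:ℕ∞):WithTop ℕ∞) (fun y => σ y i α) M :=
    fun i α => (contDiffOn_pi.1 ((contDiffOn_pi.1 (hσ.of_le (by simp))) i)) α
  have hY' : ∀ k, ContDiffOn ℝ ((⊤:ℕ∞):WithTop ℕ∞) (fun y => Y y k) M :=
    fun k => (contDiffOn_pi.1 (hY.of_le (by simp))) k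
  -- expand Y(Lf)
  have e1 : ∑ k, Y x k * pd (fun y => generator b σ f y) k x
      = ∑ k, Y x k * ((∑ i, ∑ j,
          (((1:ℝ)/2 * ∑ α, (pd (fun y => σ y i α) k x * σ x j α
                + σ x i α * pd (fun y => σ y j α) k x)) * pd (fun y => pd f j y) i x
          + ((1:ℝ)/2 * ∑ α, σ x i α * σ x j α)
              * pd (fun y => pd (fun z => pd f j z) i y) k x))
        + ∑ i, (pd (fun y => b y i) k x * pd f i x
            + b x i * pd (fun y => pd f i y) k x)) :=
    Finset.sum_congr rfl fun k _ =>
      congrArg (Y x k * ·) (pd_generator hM hx hb' hσ' hf' k)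
  rw [e1, generator_Yf hM hx hY' hf']
  simp only [generator]
  -- determining equations, entrywise
  have hE1' : ∀ i, ∑ k, Y x k * pd (fun y => b y i) k x
      = ((∑ p, ∑ q, ((1:ℝ)/2 * ∑ α, σ x p α * σ x q α)
            * pd (fun y => pd (fun z => Y z i) q y) p x)
          + ∑ k, b x k * pd (fun y => Y y i) k x) - τ x * b x i := by
    intro i
    have h := hsym1 x hx i
    simp only [generator] at h
    linarith
  have hE2' : ∀ i α, ∑ k, Y x k * pd (fun y => σ y i α) k x
      = (∑ p, σ x p α * pd (fun y => Y y i) p x) - τ x / 2 * σ x i α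
        - ∑ β, σ x i β * C x β α := by
    intro i α
    have h := congrFun (congrFun (hsym2 x hx) i) α
    simp only [mbracket, Matrix.add_apply, Matrix.smul_apply, Matrix.mul_apply,
      smul_eq_mul, Matrix.zero_apply] at h
    linarith
  have hF2' : ∀ i j, pd (fun y => pd f j y) i x = pd (fun y => pd f i y) j x :=
    fun i j => pd_comm hM hx hf' i j
  have hF3' : ∀ k i j, pd (fun y => pd (fun z => pd f j z) i y) k x
      = pd (fun y => pd (fun z => pd f k z) j y) i x := by
    intro k i j
    have step1 : pd (fun y => pd (fun z => pd f j z) i y) k x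
        = pd (fun y => pd (fun z => pd f j z) k y) i x :=
      pd_comm hM hx (contDiffOn_pd hM hf' j) k i
    have step2 : pd (fun y => pd (fun z => pd f j z) k y) i x
        = pd (fun y => pd (fun z => pd f k z) j y) i x :=
      pd_congr_open hM hx (fun y hy => pd_comm hM hy hf' k j) i
    exact step1.trans step2
  have hC' : ∀ α β, C x α β = - C x β α := by
    intro α β
    have h := congrFun (congrFun (hCanti x hx) β) α
    simpa [Matrix.transpose_apply, Matrix.neg_apply] using h
  exact key_algebra (fun i j => (1:ℝ)/2 * ∑ α, σ x i α * σ x j α)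
    (fun i α => σ x i α)
    (fun k i α => pd (fun y => σ y i α) k x)
    (fun k i => pd (fun y => b y i) k x)
    (fun k i => pd (fun y => Y y i) k x)
    (fun i j k => pd (fun y => pd (fun z => Y z k) j y) i x)
    (fun i => pd f i x)
    (fun i j => pd (fun y => pd f j y) i x)
    (fun k i j => pd (fun y => pd (fun z => pd f j z) i y) k x)
    (fun k => Y x k) (fun i => b x i) (fun α β => C x α β) (τ x)
    (fun i j => rfl) hE1' hE2' hF2' hF3' hC'
end

section
/- If (Y, C, τ) satisfies the determining equation [Y, σ] + (1/2)τσ + σ·C = 0 with C antisymmetric, then the matrix A = (1/2)σσᵀ satisfies Y(A) − D(Y)·A − A·D(Y)ᵀ = −τA, where D(Y) is the Jacobian matrix of Y and Y(A) the componentwise directional derivative. -/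
open Matrix

/-- The Jacobian matrix D(Y)^i_k = ∂ₖY^i. -/
noncomputable def jacobian {n : ℕ} (Y : (Fin n → ℝ) → Fin n → ℝ) (x : Fin n → ℝ) :
    Matrix (Fin n) (Fin n) ℝ :=
  fun i k => pd (fun y => Y y i) k x

/-- if [Y, σ] + (1/2)τσ + σ·C = 0 with C antisymmetric, then
A = (1/2)σσᵀ satisfies Y(A) − D(Y)·A − A·D(Y)ᵀ = −τA. -/
theorem diffusion_matrix_identity {n m : ℕ}
    (M : Set (Fin n → ℝ)) (hM : IsOpen M)
    (σ : (Fin n → ℝ) → Matrix (Fin n) (Fin m) ℝ)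
    (hσ : ContDiffOn ℝ (⊤ : ℕ∞) (fun x i α => σ x i α : (Fin n → ℝ) → Fin n → Fin m → ℝ) M)
    (Y : (Fin n → ℝ) → Fin n → ℝ) (C : (Fin n → ℝ) → Matrix (Fin m) (Fin m) ℝ)
    (τ : (Fin n → ℝ) → ℝ)
    (hY : ContDiffOn ℝ (⊤ : ℕ∞) Y M)
    (hC : ContDiffOn ℝ (⊤ : ℕ∞) (fun x i j => C x i j : (Fin n → ℝ) → Fin m → Fin m → ℝ) M)
    (hτ : ContDiffOn ℝ (⊤ : ℕ∞) τ M)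
    (hCanti : ∀ x ∈ M, (C x)ᵀ = -C x)
    (hdet : ∀ x ∈ M, mbracket Y σ x + (τ x / 2) • σ x + σ x * C x = 0) :
    ∀ x ∈ M,
      dirDeriv Y (fun y => ((1:ℝ)/2) • (σ y * (σ y)ᵀ)) x
        - jacobian Y x * (((1:ℝ)/2) • (σ x * (σ x)ᵀ))
        - (((1:ℝ)/2) • (σ x * (σ x)ᵀ)) * (jacobian Y x)ᵀ
      = -(τ x • (((1:ℝ)/2) • (σ x * (σ x)ᵀ))) := by
  intro x hx
  -- differentiability of the entries of σ at x
  have hσx : ∀ (i : Fin n) (α : Fin m), DifferentiableAt ℝ (fun y => σ y i α) x := by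
    intro i α
    have h1 : ContDiffAt ℝ (⊤ : ℕ∞) (fun x i α => σ x i α : (Fin n → ℝ) → Fin n → Fin m → ℝ) x :=
      hσ.contDiffAt (hM.mem_nhds hx)
    have h2 := (contDiffAt_pi.mp ((contDiffAt_pi.mp h1) i)) α
    exact h2.differentiableAt (by simp)
  -- antisymmetry of C x
  have hanti : ∀ α β, C x α β = - C x β α := by
    intro α β
    have := congrFun (congrFun (hCanti x hx) β) α
    simpa [Matrix.transpose_apply, Matrix.neg_apply] using this
  -- the determining equation, entrywise
  have key : ∀ (i : Fin n) (α : Fin m),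
      (∑ k, Y x k * pd (fun y => σ y i α) k x)
        = (∑ k, σ x k α * pd (fun y => Y y i) k x)
          - (τ x / 2) * σ x i α - ∑ β, σ x i β * C x β α := by
    intro i α
    have h := congrFun (congrFun (hdet x hx) i) α
    simp only [Matrix.add_apply, Matrix.smul_apply, Matrix.mul_apply, mbracket,
      smul_eq_mul, Matrix.zero_apply] at h
    linarith [h]
  -- derivative of the entries of (1/2) σ σᵀ
  have hpd : ∀ (i j k : Fin n),
      pd (fun y => (1/2 : ℝ) * ∑ α, σ y i α * σ y j α) k x
        = (1/2 : ℝ) * ∑ α, (pd (fun y => σ y i α) k x * σ x j α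
            + σ x i α * pd (fun y => σ y j α) k x) := by
    intro i j k
    unfold pd
    have hdiffsum : DifferentiableAt ℝ (fun y => ∑ α, σ y i α * σ y j α) x :=
      DifferentiableAt.fun_sum (fun α _ => (hσx i α).mul (hσx j α))
    rw [fderiv_const_mul hdiffsum]
    rw [fderiv_fun_sum (fun α _ => (hσx i α).fun_mul (hσx j α))]
    have hterm : ∀ α : Fin m,
        fderiv ℝ (fun y => σ y i α * σ y j α) x (Pi.single k 1)
          = pd (fun y => σ y i α) k x * σ x j α + σ x i α * pd (fun y => σ y j α) k x := by
      intro α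
      rw [fderiv_fun_mul (hσx i α) (hσx j α)]
      simp [pd, smul_eq_mul]
      ring
    simp only [ContinuousLinearMap.smul_apply, ContinuousLinearMap.sum_apply, smul_eq_mul]
    rw [Finset.sum_congr rfl (fun α _ => hterm α)]
    rfl
  -- cancellation of the σ C σᵀ terms by antisymmetry
  have hcancel : ∀ (i j : Fin n),
      (∑ α, (∑ β, σ x i β * C x β α) * σ x j α)
        + ∑ α, σ x i α * ∑ β, σ x j β * C x β α = 0 := by
    intro i j
    have h2 : ∑ α, σ x i α * ∑ β, σ x j β * C x β α
        = - ∑ α, (∑ β, σ x i β * C x β α) * σ x j α := by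
      calc ∑ α, σ x i α * ∑ β, σ x j β * C x β α
          = ∑ α, ∑ β, σ x i α * (σ x j β * C x β α) := by
            simp only [Finset.mul_sum]
        _ = ∑ β, ∑ α, σ x i α * (σ x j β * C x β α) := Finset.sum_comm
        _ = ∑ α, ∑ β, -(σ x i β * C x β α * σ x j α) := by
            refine Finset.sum_congr rfl (fun α _ => ?_)
            refine Finset.sum_congr rfl (fun β _ => ?_)
            rw [hanti α β]; ring
        _ = - ∑ α, (∑ β, σ x i β * C x β α) * σ x j α := by
            simp only [Finset.sum_neg_distrib, Finset.sum_mul]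
    rw [h2]; ring
  have swap_mul : ∀ (c : Fin n → ℝ) (f : Fin n → Fin m → ℝ),
      ∑ k, c k * ((1/2:ℝ) * ∑ α, f k α) = (1/2:ℝ) * ∑ α, ∑ k, c k * f k α := by
    intro c f
    calc ∑ k, c k * ((1/2:ℝ) * ∑ α, f k α)
        = ∑ k, ∑ α, (1/2:ℝ) * (c k * f k α) :=
          Finset.sum_congr rfl fun k _ => by
            rw [Finset.mul_sum, Finset.mul_sum]
            exact Finset.sum_congr rfl fun α _ => by ring
      _ = ∑ α, ∑ k, (1/2:ℝ) * (c k * f k α) := Finset.sum_comm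
      _ = (1/2:ℝ) * ∑ α, ∑ k, c k * f k α := by
          rw [Finset.mul_sum]
          exact Finset.sum_congr rfl fun α _ => by rw [Finset.mul_sum]
  -- main computation, entrywise
  ext i j
  simp only [Matrix.sub_apply, Matrix.neg_apply, Matrix.mul_apply, Matrix.smul_apply,
    Matrix.transpose_apply, smul_eq_mul, dirDeriv, jacobian]
  simp only [hpd]
  have t1 : ∑ k, Y x k * ((1/2:ℝ) * ∑ α, (pd (fun y => σ y i α) k x * σ x j α
        + σ x i α * pd (fun y => σ y j α) k x))
      = (1/2:ℝ) * ∑ α, ((∑ k, Y x k * pd (fun y => σ y i α) k x) * σ x j α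
          + σ x i α * (∑ k, Y x k * pd (fun y => σ y j α) k x)) := by
    rw [swap_mul]
    refine congrArg _ (Finset.sum_congr rfl fun α _ => ?_)
    calc ∑ k, Y x k * (pd (fun y => σ y i α) k x * σ x j α
            + σ x i α * pd (fun y => σ y j α) k x)
        = ∑ k, ((Y x k * pd (fun y => σ y i α) k x) * σ x j α
            + σ x i α * (Y x k * pd (fun y => σ y j α) k x)) :=
          Finset.sum_congr rfl fun k _ => by ring
      _ = _ := by rw [Finset.sum_add_distrib, ← Finset.sum_mul, ← Finset.mul_sum]
  have t2 : ∑ k, pd (fun y => Y y i) k x * ((1/2:ℝ) * ∑ α, σ x k α * σ x j α)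
      = (1/2:ℝ) * ∑ α, (∑ k, σ x k α * pd (fun y => Y y i) k x) * σ x j α := by
    rw [swap_mul]
    refine congrArg _ (Finset.sum_congr rfl fun α _ => ?_)
    rw [Finset.sum_mul]
    exact Finset.sum_congr rfl fun k _ => by ring
  have t3 : ∑ k, ((1/2:ℝ) * ∑ α, σ x i α * σ x k α) * pd (fun y => Y y j) k x
      = (1/2:ℝ) * ∑ α, σ x i α * (∑ k, σ x k α * pd (fun y => Y y j) k x) := by
    rw [show (∑ k, ((1/2:ℝ) * ∑ α, σ x i α * σ x k α) * pd (fun y => Y y j) k x)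
        = ∑ k, pd (fun y => Y y j) k x * ((1/2:ℝ) * ∑ α, σ x i α * σ x k α) from
      Finset.sum_congr rfl fun k _ => by ring]
    rw [swap_mul]
    refine congrArg _ (Finset.sum_congr rfl fun α _ => ?_)
    rw [Finset.mul_sum]
    exact Finset.sum_congr rfl fun k _ => by ring
  rw [t1, t2, t3]
  calc (1/2:ℝ) * ∑ α, ((∑ k, Y x k * pd (fun y => σ y i α) k x) * σ x j α
          + σ x i α * (∑ k, Y x k * pd (fun y => σ y j α) k x))
        - (1/2:ℝ) * ∑ α, (∑ k, σ x k α * pd (fun y => Y y i) k x) * σ x j α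
        - (1/2:ℝ) * ∑ α, σ x i α * (∑ k, σ x k α * pd (fun y => Y y j) k x)
      = (1/2:ℝ) * ∑ α, (((∑ k, Y x k * pd (fun y => σ y i α) k x) * σ x j α
            + σ x i α * (∑ k, Y x k * pd (fun y => σ y j α) k x))
          - (∑ k, σ x k α * pd (fun y => Y y i) k x) * σ x j α
          - σ x i α * (∑ k, σ x k α * pd (fun y => Y y j) k x)) := by
        rw [Finset.sum_sub_distrib, Finset.sum_sub_distrib]; ring
    _ = (1/2:ℝ) * ∑ α, (-(τ x * (σ x i α * σ x j α))
          - ((∑ β, σ x i β * C x β α) * σ x j α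
            + σ x i α * (∑ β, σ x j β * C x β α))) := by
        refine congrArg _ (Finset.sum_congr rfl (fun α _ => ?_))
        rw [key i α, key j α]; ring
    _ = -(τ x * ((1/2:ℝ) * ∑ α, σ x i α * σ x j α)) := by
        rw [Finset.sum_sub_distrib, Finset.sum_add_distrib, hcancel i j]
        rw [show (∑ α, -(τ x * (σ x i α * σ x j α)))
            = -∑ α, τ x * (σ x i α * σ x j α) from Finset.sum_neg_distrib _]
        simp only [sub_zero, ← Finset.mul_sum]
        ring
end
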